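/- arXiv:2505.04144 — 2 statements merged into one kernel-verified Lean document; each statement's English description precedes it below -/
import Mathlib

section
/- If G is a connected triangle-free graph of order n, then χ_{μ_i}(G) ≤ ⌈(n − Δ(G))/2⌉ + 1. -/
open SimpleGraph

variable {V W : Type*}

/-- Two vertices of `X` are `X`-visible if some geodesic between them has all
internal vertices outside `X`; `X` is a mutual-visibility set if this holds
for every reachable pair of vertices of `X`. -/
def IsMVSet (G : SimpleGraph V) (X : Set V) : Prop :=
  ∀ x ∈ X, ∀ y ∈ X, x ≠ y → G.Reachable x y →
    ∃ p : G.Walk x y, p.length = G.dist x y ∧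
      ∀ z ∈ p.support, z ≠ x → z ≠ y → z ∉ X

/-- An independent mutual-visibility set. -/
def IsIMVSet (G : SimpleGraph V) (X : Set V) : Prop :=
  (∀ x ∈ X, ∀ y ∈ X, ¬ G.Adj x y) ∧ IsMVSet G X

/-- The mutual-visibility chromatic number: the least `k` such that the vertex
set partitions into `k` mutual-visibility sets. -/
noncomputable def mvChrom (G : SimpleGraph V) : ℕ :=
  sInf {k | ∃ f : V → Fin k, ∀ i, IsMVSet G (f ⁻¹' {i})}

/-- The independent mutual-visibility chromatic number. -/
noncomputable def imvChrom (G : SimpleGraph V) : ℕ :=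
  sInf {k | ∃ f : V → Fin k, ∀ i, IsIMVSet G (f ⁻¹' {i})}

/-- The chromatic number, as a natural number. -/
noncomputable def chromNat (G : SimpleGraph V) : ℕ :=
  sInf {k | G.Colorable k}

/-- The independent mutual-visibility number `μᵢ(G)`. -/
noncomputable def imvNum (G : SimpleGraph V) : ℕ :=
  sSup {n | ∃ s : Finset V, IsIMVSet G ↑s ∧ s.card = n}

/-- The independence number `α(G)`. -/
noncomputable def indepNum (G : SimpleGraph V) : ℕ :=
  sSup {n | ∃ s : Finset V, (∀ x ∈ s, ∀ y ∈ s, ¬ G.Adj x y) ∧ s.card = n}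

/-! Let `v` be a vertex of maximum degree `Δ`. As `G` is triangle-free, `N(v)` is independent,
and two of its vertices are at distance `2` through `v ∉ N(v)`, so `N(v)` is one colour class.
An independent set of at most two vertices is trivially mutual-visibility, so it remains to
split the `n - Δ` vertices outside `N(v)` into `⌈(n - Δ)/2⌉` independent sets of size `≤ 2`.
Pair off non-adjacent vertices other than `v` while they exist; what is left besides `v` is a
clique, hence has at most two vertices, and `v`, having no neighbour outside `N(v)`, pairs
with one of them. -/

section

variable {G : SimpleGraph V}

theorem SimpleGraph.CliqueFree.card_lt_of_isClique {n : ℕ} {s : Finset V} (hG : G.CliqueFree n)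
    (hs : G.IsClique (s : Set V)) : s.card < n := by
  by_contra! hn
  obtain ⟨t, hts, htn⟩ := Finset.exists_subset_card_eq hn
  exact hG t ⟨hs.subset (by simpa using hts), htn⟩

theorem IsIMVSet.mono {X Y : Set V} (hY : IsIMVSet G Y) (hXY : X ⊆ Y) : IsIMVSet G X := by
  refine ⟨fun x hx y hy => hY.1 x (hXY hx) y (hXY hy), fun x hx y hy hxy hr => ?_⟩
  obtain ⟨p, hp, hint⟩ := hY.2 x (hXY hx) y (hXY hy) hxy hr
  exact ⟨p, hp, fun z hz hzx hzy hzX => hint z hz hzx hzy (hXY hzX)⟩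

theorem isIMVSet_pair {u w : V} (h : ¬ G.Adj u w) : IsIMVSet G {u, w} := by
  refine ⟨?_, fun x hx y hy hxy hr => ?_⟩
  · rintro x (rfl | rfl) y (rfl | rfl) hxy
    exacts [G.irrefl hxy, h hxy, h hxy.symm, G.irrefl hxy]
  · obtain ⟨p, hp⟩ := hr.exists_walk_length_eq_dist
    refine ⟨p, hp, fun z _ hzx hzy hz => ?_⟩
    simp only [Set.mem_insert_iff, Set.mem_singleton_iff] at hx hy hz
    grind

theorem isIMVSet_neighborSet (htf : G.CliqueFree 3) (v : V) :
    IsIMVSet G (G.neighborSet v) := by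
  have hind := isIndepSet_neighborSet_of_triangleFree G htf v
  refine ⟨fun x hx y hy hxy => hind hx hy (G.ne_of_adj hxy) hxy, fun x hx y hy hxy _ => ?_⟩
  have hvx : G.Adj v x := hx
  have hvy : G.Adj v y := hy
  let p : G.Walk x y := .cons hvx.symm (.cons hvy .nil)
  have hdist : G.dist x y = 2 := by
    have hle : G.dist x y ≤ 2 := G.dist_le p
    have h0 : G.dist x y ≠ 0 := mt p.reachable.dist_eq_zero_iff.1 hxy
    have h1 : G.dist x y ≠ 1 := fun h => hind hx hy hxy (dist_eq_one_iff_adj.1 h)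
    omega
  refine ⟨p, hdist.symm, fun z hz hzx hzy hzN => ?_⟩
  have hzv : z = v := by simpa [p, hzx, hzy] using hz
  exact G.irrefl (hzv ▸ hzN)

def IsIMVCover (G : SimpleGraph V) (𝒜 : Finset (Set V)) (s : Set V) : Prop :=
  (∀ P ∈ 𝒜, IsIMVSet G P) ∧ ∀ x ∈ s, ∃ P ∈ 𝒜, x ∈ P

open Classical in
theorem IsIMVCover.insert {𝒜 : Finset (Set V)} {P s t : Set V} (h : IsIMVCover G 𝒜 s)
    (hP : IsIMVSet G P) (hts : t ⊆ P ∪ s) : IsIMVCover G (insert P 𝒜) t := by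
  refine ⟨fun Q hQ => ?_, fun x hx => ?_⟩
  · rcases Finset.mem_insert.1 hQ with rfl | hQ
    exacts [hP, h.1 Q hQ]
  · rcases hts hx with hx | hx
    · exact ⟨P, Finset.mem_insert_self _ _, hx⟩
    · obtain ⟨Q, hQ, hxQ⟩ := h.2 x hx
      exact ⟨Q, Finset.mem_insert_of_mem hQ, hxQ⟩

open Classical in
theorem isIMVCover_image_singleton (s : Finset V) :
    IsIMVCover G (s.image fun w => {w}) s := by
  refine ⟨?_, fun x hx => ⟨{x}, Finset.mem_image_of_mem _ hx, rfl⟩⟩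
  simp only [Finset.mem_image, forall_exists_index, and_imp, forall_apply_eq_imp_iff₂]
  intro w _
  simpa using isIMVSet_pair (G.irrefl (v := w))

theorem imvChrom_le_card_of_isIMVCover {𝒜 : Finset (Set V)} (h : IsIMVCover G 𝒜 Set.univ) :
    imvChrom G ≤ 𝒜.card := by
  choose part hpart hmem using fun x => h.2 x trivial
  refine Nat.sInf_le ⟨fun x => 𝒜.equivFin ⟨part x, hpart x⟩, fun i => ?_⟩
  refine (h.1 _ (𝒜.equivFin.symm i).2).mono fun x hx => ?_
  rw [Set.mem_preimage, Set.mem_singleton_iff, ← Equiv.eq_symm_apply] at hx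
  exact hx ▸ hmem x

open Classical in
theorem exists_isIMVCover_insert_of_card_le_two {v : V} {R : Finset V} (hR : R.card ≤ 2)
    (hvR : ∀ u ∈ R, ¬ G.Adj v u) :
    ∃ 𝒜 : Finset (Set V), IsIMVCover G 𝒜 ↑(insert v R) ∧ 𝒜.card ≤ (R.card + 2) / 2 := by
  rcases R.eq_empty_or_nonempty with rfl | ⟨u, hu⟩
  · exact ⟨_, isIMVCover_image_singleton _, Finset.card_image_le.trans (by simp)⟩
  · refine ⟨insert {v, u} ((R.erase u).image fun w => {w}),
      (isIMVCover_image_singleton _).insert (isIMVSet_pair (hvR u hu)) ?_, ?_⟩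
    · intro x hx
      by_cases hxu : x = u <;> simp_all
    · have hR0 : 0 < R.card := Finset.card_pos.2 ⟨u, hu⟩
      calc _ ≤ ((R.erase u).image fun w => ({w} : Set V)).card + 1 := Finset.card_insert_le _ _
        _ ≤ (R.erase u).card + 1 := Nat.succ_le_succ Finset.card_image_le
        _ ≤ (R.card + 2) / 2 := by rw [R.card_erase_of_mem hu]; omega

open Classical in
theorem exists_isIMVCover_insert (htf : G.CliqueFree 3) (v : V) (R : Finset V)
    (hvR : ∀ u ∈ R, ¬ G.Adj v u) :
    ∃ 𝒜 : Finset (Set V), IsIMVCover G 𝒜 ↑(insert v R) ∧ 𝒜.card ≤ (R.card + 2) / 2 := by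
  induction R using Finset.strongInduction with
  | H R ih =>
  by_cases hR : G.IsClique (R : Set V)
  · exact exists_isIMVCover_insert_of_card_le_two
      (Nat.lt_succ_iff.1 (htf.card_lt_of_isClique hR)) hvR
  obtain ⟨u, hu, w, hw, huw, hnadj⟩ : ∃ u ∈ R, ∃ w ∈ R, u ≠ w ∧ ¬ G.Adj u w := by
    simpa [IsClique, Set.Pairwise] using hR
  have hsub : {u, w} ⊆ R := Finset.insert_subset hu (Finset.singleton_subset_iff.2 hw)
  obtain ⟨𝒜, h𝒜, hcard⟩ := ih (R \ {u, w}) (Finset.sdiff_ssubset hsub (by simp))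
    fun x hx => hvR x (Finset.mem_sdiff.1 hx).1
  refine ⟨insert {u, w} 𝒜, h𝒜.insert (isIMVSet_pair hnadj) ?_, ?_⟩
  · intro x hx
    by_cases hxu : x = u <;> by_cases hxw : x = w <;> simp_all
  · have hsplit := Finset.card_sdiff_add_card_eq_card hsub
    rw [Finset.card_pair huw] at hsplit
    calc _ ≤ 𝒜.card + 1 := Finset.card_insert_le _ _
      _ ≤ (R.card + 2) / 2 := by omega

end

theorem stmt9_general [Fintype V] (G : SimpleGraph V) [DecidableRel G.Adj]
    (htf : G.CliqueFree 3) :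
    imvChrom G ≤ (Fintype.card V - G.maxDegree + 1) / 2 + 1 := by
  classical
  cases isEmpty_or_nonempty V
  · exact (imvChrom_le_card_of_isIMVCover (𝒜 := ∅) ⟨by simp, fun x => isEmptyElim x⟩).trans
      (Nat.zero_le _)
  obtain ⟨v, hv⟩ := G.exists_maximal_degree_vertex
  set R := Finset.univ \ insert v (G.neighborFinset v)
  obtain ⟨𝒜, h𝒜, hcard⟩ := exists_isIMVCover_insert htf v R (by simp [R])
  have hR : R.card = Fintype.card V - (G.degree v + 1) := by
    rw [Finset.card_sdiff_of_subset (Finset.subset_univ _), Finset.card_univ,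
      Finset.card_insert_of_notMem (G.notMem_neighborFinset_self v), card_neighborFinset_eq_degree]
  calc imvChrom G ≤ (insert (G.neighborSet v) 𝒜).card :=
        imvChrom_le_card_of_isIMVCover
          (h𝒜.insert (isIMVSet_neighborSet htf v) (fun x _ => by by_cases x = v <;> simp_all [R]))
    _ ≤ 𝒜.card + 1 := Finset.card_insert_le _ _
    _ ≤ (Fintype.card V - G.maxDegree + 1) / 2 + 1 := by
      have := G.degree_lt_card_verts v
      omega

theorem stmt9 [Fintype V] (G : SimpleGraph V) [DecidableRel G.Adj]
    (hconn : G.Connected) (htf : G.CliqueFree 3) :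
    imvChrom G ≤ (Fintype.card V - G.maxDegree + 1) / 2 + 1 :=
  stmt9_general G htf
end

section
/- If G is a connected graph and n a positive integer, then χ_μ(G □ K_n) ≤ χ_{μ_i}(G), where □ denotes the Cartesian product. -/
open SimpleGraph

variable {V W : Type*}

/-! Give `(g, h)` the colour of `g` in an optimal partition of `G` into independent
mutual-visibility sets. Two vertices of one colour class in the same copy of `G` see each other
along the copy of a visible geodesic of `G`; two in the same copy of `K_n` are adjacent. Otherwise
the class being independent, a visible geodesic `x z ⋯ y` of `G` has `z` internal, and
`(x, a) (z, a) (z, b) ⋯ (y, b)` is a visible geodesic of the product, since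
`d((x, a), (y, b)) = d_G(x, y) + 1`. -/

namespace SimpleGraph

lemma dist_boxProd {G : SimpleGraph V} {H : SimpleGraph W} {x y : V × W}
    (h : (G □ H).Reachable x y) :
    (G □ H).dist x y = G.dist x.1 y.1 + H.dist x.2 y.2 := by
  obtain ⟨hG, hH⟩ := reachable_boxProd.1 h
  apply Nat.cast_injective (R := ℕ∞)
  rw [Nat.cast_add, h.coe_dist_eq_edist, hG.coe_dist_eq_edist, hH.coe_dist_eq_edist,
    edist_boxProd]

lemma Walk.support_boxProdLeft {G : SimpleGraph V} (H : SimpleGraph W) {x y : V} (b : W)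
    (p : G.Walk x y) : (p.boxProdLeft H b).support = p.support.map (·, b) :=
  Walk.support_map _ _

@[simp]
lemma Walk.length_boxProdLeft {G : SimpleGraph V} (H : SimpleGraph W) {x y : V} (b : W)
    (p : G.Walk x y) : (p.boxProdLeft H b).length = p.length :=
  Walk.length_map _ _

end SimpleGraph

open SimpleGraph

def Visible (G : SimpleGraph V) (X : Set V) (x y : V) : Prop :=
  ∃ p : G.Walk x y, p.length = G.dist x y ∧ ∀ z ∈ p.support, z ≠ x → z ≠ y → z ∉ X

section Visible

variable {G : SimpleGraph V} {H : SimpleGraph W} {X : Set V}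

lemma SimpleGraph.Adj.visible {x y : V} (h : G.Adj x y) : Visible G X x y := by
  refine ⟨.cons h .nil, (dist_eq_one_iff_adj.2 h).symm, fun z hz hzx hzy => ?_⟩
  simp_all

lemma Visible.boxProdLeft {x y : V} (h : Visible G X x y) (b : W) :
    Visible (G □ H) (Prod.fst ⁻¹' X) (x, b) (y, b) := by
  obtain ⟨p, hp, hpX⟩ := h
  refine ⟨p.boxProdLeft H b, ?_, ?_⟩
  · simp [dist_boxProd ⟨p.boxProdLeft H b⟩, hp]
  · rintro ⟨z, c⟩ hz hzx hzy
    rw [Walk.support_boxProdLeft, List.mem_map] at hz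
    obtain ⟨z, hz, ⟨⟩⟩ := hz
    exact hpX z hz (by rintro rfl; exact hzx rfl) (by rintro rfl; exact hzy rfl)

/-- Switch the second coordinate right after the first step of the geodesic: the one extra step
is exactly what the product distance requires, and the switching vertex is internal because
`x` and `y` are not adjacent. -/
lemma Visible.boxProd_of_not_adj {x y : V} (h : Visible G X x y) (hxy : x ≠ y)
    (hnadj : ¬G.Adj x y) {a b : W} (hab : H.Adj a b) :
    Visible (G □ H) (Prod.fst ⁻¹' X) (x, a) (y, b) := by
  obtain ⟨p, hp, hpX⟩ := h
  cases p with
  | nil => exact absurd rfl hxy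
  | @cons _ z _ hxz q =>
    have hxq : x ∉ q.support :=
      ((Walk.cons_isPath_iff _ _).1 ((Walk.cons hxz q).isPath_of_length_eq_dist hp)).2
    have hzy : z ≠ y := by rintro rfl; exact hnadj hxz
    let r : (G □ H).Walk (x, a) (y, b) :=
      .cons (boxProd_adj_left.2 hxz) (.cons (boxProd_adj_right.2 hab) (q.boxProdLeft H b))
    refine ⟨r, ?_, ?_⟩
    · rw [dist_boxProd ⟨r⟩, ← hp, dist_eq_one_iff_adj.2 hab]
      simp [r]
    · have hinternal : ∀ w ∈ q.support, w ≠ y → w ∉ X := fun w hw hwy =>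
        hpX w (List.mem_cons_of_mem _ hw) (by rintro rfl; exact hxq hw) hwy
      rintro ⟨w, c⟩ hw hwx hwy
      simp only [r, Walk.support_cons, Walk.support_boxProdLeft, List.mem_cons,
        List.mem_map] at hw
      rcases hw with hw | ⟨rfl, rfl⟩ | ⟨w, hw, ⟨⟩⟩
      · exact absurd hw hwx
      · exact hinternal z q.start_mem_support hzy
      · exact hinternal w hw (by rintro rfl; exact hwy rfl)

end Visible

lemma IsIMVSet.isMVSet_boxProd_top {G : SimpleGraph V} {X : Set V} (hX : IsIMVSet G X) :
    IsMVSet (G □ (⊤ : SimpleGraph W)) (Prod.fst ⁻¹' X) := by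
  rintro ⟨x, a⟩ hx ⟨y, b⟩ hy hne hreach
  obtain rfl | hxy := eq_or_ne x y
  · exact Adj.visible (boxProd_adj_right.2 ((top_adj a b).2 (by rintro rfl; exact hne rfl)))
  have hvis : Visible G X x y := hX.2 x hx y hy hxy (reachable_boxProd.1 hreach).1
  obtain rfl | hab := eq_or_ne a b
  · exact hvis.boxProdLeft a
  · exact hvis.boxProd_of_not_adj hxy (hX.1 x hx y hy) ((top_adj a b).2 hab)

lemma isIMVSet_of_subsingleton {G : SimpleGraph V} {X : Set V} (hX : X.Subsingleton) :
    IsIMVSet G X :=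
  ⟨fun x hx _ hy hadj => G.loopless.irrefl x (hX hx hy ▸ hadj),
    fun _ hx _ hy hxy _ => absurd (hX hx hy) hxy⟩

lemma exists_imvColoring [Finite V] (G : SimpleGraph V) :
    ∃ f : V → Fin (imvChrom G), ∀ i, IsIMVSet G (f ⁻¹' {i}) := by
  obtain ⟨k, ⟨e⟩⟩ := Finite.exists_equiv_fin V
  have hk : ∃ f : V → Fin k, ∀ i, IsIMVSet G (f ⁻¹' {i}) :=
    ⟨e, fun _ => isIMVSet_of_subsingleton fun _ hx _ hy => e.injective (hx.trans hy.symm)⟩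
  exact Nat.sInf_mem (s := {k | ∃ f : V → Fin k, ∀ i, IsIMVSet G (f ⁻¹' {i})})
    ⟨k, hk⟩

lemma mvChrom_boxProd_top_le_imvChrom [Finite V] (G : SimpleGraph V) :
    mvChrom (G □ (⊤ : SimpleGraph W)) ≤ imvChrom G := by
  obtain ⟨f, hf⟩ := exists_imvColoring G
  exact Nat.sInf_le ⟨f ∘ Prod.fst, fun i => (hf i).isMVSet_boxProd_top⟩

theorem stmt19_general [Fintype V] (G : SimpleGraph V) (n : ℕ) :
    mvChrom (G.boxProd (⊤ : SimpleGraph (Fin n))) ≤ imvChrom G :=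
  mvChrom_boxProd_top_le_imvChrom G

theorem stmt19 [Fintype V] (G : SimpleGraph V) (hconn : G.Connected)
    (n : ℕ) (hn : 0 < n) :
    mvChrom (G.boxProd (⊤ : SimpleGraph (Fin n))) ≤ imvChrom G :=
  stmt19_general G n
end
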